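/- Let ψ ∈ ℂ^m⊗ℂ^n and φ ∈ ℂ^u⊗ℂ^v be unit vectors with Schmidt decompositions ψ = Σ_i λ_i (a_i ⊗ b_i) and φ = Σ_j μ_j (c_j ⊗ d_j), where (a_i), (b_i), (c_j), (d_j) are orthonormal families and λ_i, μ_j ≥ 0 with Σ_i λ_i² = Σ_j μ_j² = 1. Set ρ = ψψ† ⊗ φφ† and σ = Σ_{i,j} λ_i² μ_j² (b_i⊗c_j)(b_i⊗c_j)†. Then for every rank-one von Neumann measurement {Π_h = u_h u_h†} on ℂ^n⊗ℂ^u, tr( ρ · Π^{BC}(ρ) ) = Σ_h (⟨u_h, σ u_h⟩)². -/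

import Mathlib

open scoped Matrix Kronecker BigOperators ComplexOrder
open Matrix

/-- The positive-semidefinite square root of a PSD matrix (0 if not PSD). -/
noncomputable def psdSqrt {N : Type*} [Fintype N] [DecidableEq N] (A : Matrix N N ℂ) :
    Matrix N N ℂ :=
  open scoped Classical in
  if h : A.PosSemidef then (h.1.eigenvectorUnitary : Matrix N N ℂ) *
    diagonal ((↑) ∘ (√·) ∘ h.1.eigenvalues) * (star (h.1.eigenvectorUnitary : Matrix N N ℂ))
    else 0

/-- Squared Frobenius (Hilbert–Schmidt) norm: `‖X‖² = tr (Xᴴ X)`. -/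
noncomputable def hsNormSq {N : Type*} [Fintype N] (X : Matrix N N ℂ) : ℝ :=
  (Matrix.trace (Xᴴ * X)).re

/-- A density matrix: positive semidefinite with unit trace. -/
def IsDensity {N : Type*} [Fintype N] [DecidableEq N] (ρ : Matrix N N ℂ) : Prop :=
  ρ.PosSemidef ∧ ρ.trace = 1

/-- Standard inner product on `ℂ^N`. -/
noncomputable def cInner {N : Type*} [Fintype N] (x y : N → ℂ) : ℂ :=
  ∑ i, star (x i) * y i

/-- Outer product `ψ ψ†`. -/
noncomputable def outer {N : Type*} (ψ : N → ℂ) : Matrix N N ℂ :=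
  Matrix.vecMulVec ψ (star ψ)

/-- The family of unit vectors of a rank-one von Neumann measurement: an orthonormal basis,
indexed by the dimension. -/
def IsVNM {N : Type*} [Fintype N] [DecidableEq N] (u : N → N → ℂ) : Prop :=
  ∀ a b, cInner (u a) (u b) = if a = b then (1 : ℂ) else 0

/-- The rank-one projection `Π_h = u_h u_h†` of a measurement. -/
noncomputable def projOf {N : Type*} (u : N → N → ℂ) (h : N) : Matrix N N ℂ :=
  outer (u h)

/-- The measurement `{u_h u_h†}` fixes `σ`: `Σ_h Π_h σ Π_h = σ`. -/
def FixesVNM {N : Type*} [Fintype N] (u : N → N → ℂ) (σ : Matrix N N ℂ) : Prop :=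
  ∑ h, projOf u h * σ * projOf u h = σ

/-- Reduced state of the second factor: `(ρ_B)_{j j'} = Σ_i ρ_{(i,j),(i,j')}`. -/
noncomputable def redB {m n : ℕ} (ρ : Matrix (Fin m × Fin n) (Fin m × Fin n) ℂ) :
    Matrix (Fin n) (Fin n) ℂ :=
  Matrix.of fun j j' => ∑ i, ρ (i, j) (i, j')

/-- Reduced state of the first factor: `(ρ_C)_{k k'} = Σ_l ρ_{(k,l),(k',l)}`. -/
noncomputable def redC {u v : ℕ} (ρ : Matrix (Fin u × Fin v) (Fin u × Fin v) ℂ) :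
    Matrix (Fin u) (Fin u) ℂ :=
  Matrix.of fun k k' => ∑ l, ρ (k, l) (k', l)

/-- `I_m ⊗ P ⊗ I_v` acting on the middle two factors. -/
noncomputable def ampMid (m v : ℕ) {n u : ℕ} (P : Matrix (Fin n × Fin u) (Fin n × Fin u) ℂ) :
    Matrix ((Fin m × Fin n) × Fin u × Fin v) ((Fin m × Fin n) × Fin u × Fin v) ℂ :=
  Matrix.of fun p q =>
    (if p.1.1 = q.1.1 then (1 : ℂ) else 0) * P (p.1.2, p.2.1) (q.1.2, q.2.1) *
      (if p.2.2 = q.2.2 then (1 : ℂ) else 0)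

/-- The map `Π^{BC}(X) = Σ_h (I_m ⊗ Π_h ⊗ I_v) X (I_m ⊗ Π_h ⊗ I_v)`. -/
noncomputable def pinchBC {m n u v : ℕ} (w : (Fin n × Fin u) → (Fin n × Fin u) → ℂ)
    (X : Matrix ((Fin m × Fin n) × Fin u × Fin v) ((Fin m × Fin n) × Fin u × Fin v) ℂ) :
    Matrix ((Fin m × Fin n) × Fin u × Fin v) ((Fin m × Fin n) × Fin u × Fin v) ℂ :=
  ∑ h, ampMid m v (projOf w h) * X * ampMid m v (projOf w h)

/-- The measurement-induced nonbilocality `N_H^b(ρ_AB ⊗ ρ_CD)`. -/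
noncomputable def NHb {m n u v : ℕ}
    (ρAB : Matrix (Fin m × Fin n) (Fin m × Fin n) ℂ)
    (ρCD : Matrix (Fin u × Fin v) (Fin u × Fin v) ℂ) : ℝ :=
  sSup { r : ℝ | ∃ w : (Fin n × Fin u) → (Fin n × Fin u) → ℂ,
    IsVNM w ∧ FixesVNM w (redB ρAB ⊗ₖ redC ρCD) ∧
    r = hsNormSq (psdSqrt (ρAB ⊗ₖ ρCD) - pinchBC w (psdSqrt (ρAB ⊗ₖ ρCD))) }

/-! `ρ` is the rank-one projector onto `Ψ = ψ ⊗ φ`, so with `A_h = I ⊗ Π_h ⊗ I` each term of the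
trace is `tr (ΨΨ† A_h ΨΨ† A_h) = tr (ΨΨ† A_h)²`. Tracing out the outer factors turns
`tr (ΨΨ† A_h)` into `tr (Π_h (ρ_B ⊗ ρ_C))`, and orthonormality of the Schmidt vectors `a_i` and
`d_j` gives `ρ_B = Σ λ_i² b_i b_i†` and `ρ_C = Σ μ_j² c_j c_j†`, so `ρ_B ⊗ ρ_C = σ`. -/

section OuterProduct

variable {N : Type*} [Fintype N]

lemma trace_outer_mul (x : N → ℂ) (A : Matrix N N ℂ) :
    trace (outer x * A) = cInner x (A *ᵥ x) := by
  rw [outer, vecMulVec_mul, trace_vecMulVec, dotProduct_comm, ← dotProduct_mulVec]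
  rfl

lemma outer_mul_mul_outer (x : N → ℂ) (A : Matrix N N ℂ) :
    outer x * A * outer x = trace (outer x * A) • outer x := by
  rw [trace_outer_mul, outer, vecMulVec_mul, vecMulVec_mul_vecMulVec, ← dotProduct_mulVec,
    vecMulVec_smul]
  rfl

lemma trace_outer_mul_mul_outer_mul (x : N → ℂ) (A : Matrix N N ℂ) :
    trace (outer x * (A * outer x * A)) = trace (outer x * A) ^ 2 := by
  rw [← Matrix.mul_assoc, ← Matrix.mul_assoc, outer_mul_mul_outer, smul_mul, trace_smul,
    smul_eq_mul, sq]

end OuterProduct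

lemma outer_kronecker_outer {α β : Type*} (x : α → ℂ) (y : β → ℂ) :
    outer x ⊗ₖ outer y = outer (fun p : α × β => x p.1 * y p.2) := by
  ext ⟨p, r⟩ ⟨q, s⟩
  simp only [outer, kroneckerMap_apply, vecMulVec_apply, Pi.star_apply, star_mul']
  ring

lemma mul_ampMid_apply {m n u v : ℕ} {ι : Type*}
    (X : Matrix ι ((Fin m × Fin n) × Fin u × Fin v) ℂ)
    (P : Matrix (Fin n × Fin u) (Fin n × Fin u) ℂ) (p : ι) (q : (Fin m × Fin n) × Fin u × Fin v) :
    (X * ampMid m v P) p q = ∑ x, X p ((q.1.1, x.1), (x.2, q.2.2)) * P x (q.1.2, q.2.1) := by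
  simp [mul_apply, ampMid, Fintype.sum_prod_type, mul_ite, ite_mul, Finset.sum_ite_irrel]

lemma trace_kronecker_mul_ampMid {m n u v : ℕ} (ρAB : Matrix (Fin m × Fin n) (Fin m × Fin n) ℂ)
    (ρCD : Matrix (Fin u × Fin v) (Fin u × Fin v) ℂ)
    (P : Matrix (Fin n × Fin u) (Fin n × Fin u) ℂ) :
    trace ((ρAB ⊗ₖ ρCD) * ampMid m v P) = trace (P * (redB ρAB ⊗ₖ redC ρCD)) := by
  simp only [trace, diag, mul_ampMid_apply]
  rw [Finset.sum_comm]
  refine Finset.sum_congr rfl fun x _ => ?_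
  simp only [mul_apply, kroneckerMap_apply, redB, redC, of_apply, Finset.mul_sum,
    Finset.sum_mul, Fintype.sum_prod_type]
  rw [Finset.sum_comm]
  refine Finset.sum_congr rfl fun pn _ => ?_
  rw [Finset.sum_comm]
  refine Finset.sum_congr rfl fun pu _ => ?_
  rw [Finset.sum_comm]
  refine Finset.sum_congr rfl fun pv _ => Finset.sum_congr rfl fun pm _ => ?_
  ring

lemma sum_schmidt_mul_star {α β ι : Type*} [Fintype α] [Fintype ι] [DecidableEq ι]
    (lam : ι → ℝ) (a : ι → α → ℂ) (b : ι → β → ℂ)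
    (ha : ∀ i i', cInner (a i) (a i') = if i = i' then (1 : ℂ) else 0) (x y : β) :
    ∑ p, (∑ i, (lam i : ℂ) * a i p * b i x) * star (∑ i, (lam i : ℂ) * a i p * b i y) =
      ∑ i, ((lam i ^ 2 : ℝ) : ℂ) * (b i x * star (b i y)) := by
  have hsum : ∀ i i', ∑ p, a i p * star (a i' p) = if i = i' then 1 else 0 := fun i i' => by
    simpa only [cInner, mul_comm, eq_comm] using ha i' i
  calc _ = ∑ i, ∑ i', (lam i : ℂ) * b i x * ((lam i' : ℂ) * star (b i' y)) *
        ∑ p, a i p * star (a i' p) := by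
        simp only [star_sum, Finset.sum_mul_sum]
        simp only [Finset.mul_sum]
        rw [Finset.sum_comm]
        refine Finset.sum_congr rfl fun i _ => ?_
        rw [Finset.sum_comm]
        refine Finset.sum_congr rfl fun i' _ => Finset.sum_congr rfl fun p _ => ?_
        simp only [star_mul', Complex.star_def, Complex.conj_ofReal]
        ring
    _ = _ := by
        simp only [hsum, mul_ite, mul_one, mul_zero, Finset.sum_ite_eq, Finset.mem_univ, if_true]
        push_cast
        refine Finset.sum_congr rfl fun i _ => ?_
        ring

lemma redB_outer_schmidt {m n : ℕ} {ι : Type*} [Fintype ι] [DecidableEq ι]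
    (lam : ι → ℝ) (a : ι → Fin m → ℂ) (b : ι → Fin n → ℂ)
    (ha : ∀ i i', cInner (a i) (a i') = if i = i' then (1 : ℂ) else 0) :
    redB (outer fun p : Fin m × Fin n => ∑ i, (lam i : ℂ) * a i p.1 * b i p.2) =
      ∑ i, ((lam i ^ 2 : ℝ) : ℂ) • outer (b i) := by
  ext x y
  simp only [redB, outer, of_apply, vecMulVec_apply, Pi.star_apply, Matrix.sum_apply,
    Matrix.smul_apply, smul_eq_mul]
  exact sum_schmidt_mul_star lam a b ha x y

lemma redC_outer_schmidt {u v : ℕ} {κ : Type*} [Fintype κ] [DecidableEq κ]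
    (mu : κ → ℝ) (c : κ → Fin u → ℂ) (d : κ → Fin v → ℂ)
    (hd : ∀ j j', cInner (d j) (d j') = if j = j' then (1 : ℂ) else 0) :
    redC (outer fun p : Fin u × Fin v => ∑ j, (mu j : ℂ) * c j p.1 * d j p.2) =
      ∑ j, ((mu j ^ 2 : ℝ) : ℂ) • outer (c j) := by
  ext x y
  simp only [redC, outer, of_apply, vecMulVec_apply, Pi.star_apply, Matrix.sum_apply,
    Matrix.smul_apply, smul_eq_mul, mul_right_comm _ (c _ _)]
  exact sum_schmidt_mul_star mu d c hd x y

lemma sum_kronecker_sum {α ι κ l m n p : Type*} [NonUnitalNonAssocSemiring α] [Fintype ι]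
    [Fintype κ] (A : ι → Matrix l m α) (B : κ → Matrix n p α) :
    (∑ i, A i) ⊗ₖ (∑ j, B j) = ∑ i, ∑ j, A i ⊗ₖ B j := by
  ext
  simp only [kroneckerMap_apply, Matrix.sum_apply, Finset.sum_mul_sum]

theorem stmt1_general {m n u v : ℕ} {ι κ : Type*} [Fintype ι] [Fintype κ]
    [DecidableEq ι] [DecidableEq κ]
    (ψ : Fin m × Fin n → ℂ) (φ : Fin u × Fin v → ℂ)
    (lam : ι → ℝ) (mu : κ → ℝ)
    (a : ι → Fin m → ℂ) (b : ι → Fin n → ℂ)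
    (c : κ → Fin u → ℂ) (d : κ → Fin v → ℂ)
    (ha : ∀ i i', cInner (a i) (a i') = if i = i' then (1 : ℂ) else 0)
    (hd : ∀ j j', cInner (d j) (d j') = if j = j' then (1 : ℂ) else 0)
    (hψ : ψ = fun p => ∑ i, (lam i : ℂ) * a i p.1 * b i p.2)
    (hφ : φ = fun p => ∑ j, (mu j : ℂ) * c j p.1 * d j p.2)
    (ρ : Matrix ((Fin m × Fin n) × Fin u × Fin v) ((Fin m × Fin n) × Fin u × Fin v) ℂ)
    (hρ : ρ = outer ψ ⊗ₖ outer φ)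
    (σ : Matrix (Fin n × Fin u) (Fin n × Fin u) ℂ)
    (hσ : σ = ∑ i, ∑ j, ((lam i ^ 2 * mu j ^ 2 : ℝ) : ℂ) •
        outer (fun p : Fin n × Fin u => b i p.1 * c j p.2))
    (w : (Fin n × Fin u) → (Fin n × Fin u) → ℂ) :
    Matrix.trace (ρ * pinchBC w ρ) = ∑ h, (cInner (w h) (σ *ᵥ w h)) ^ 2 := by
  have hσ_reduced : redB (outer ψ) ⊗ₖ redC (outer φ) = σ := by
    rw [hψ, hφ, redB_outer_schmidt lam a b ha, redC_outer_schmidt mu c d hd, sum_kronecker_sum,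
      hσ]
    simp only [smul_kronecker, kronecker_smul, smul_smul, outer_kronecker_outer,
      Complex.ofReal_mul, mul_comm]
  subst hρ
  simp only [pinchBC, Finset.mul_sum, trace_sum]
  refine Finset.sum_congr rfl fun h _ => ?_
  rw [outer_kronecker_outer, trace_outer_mul_mul_outer_mul, ← outer_kronecker_outer,
    trace_kronecker_mul_ampMid, hσ_reduced, projOf, trace_outer_mul]

/-- For pure inputs and any rank-one von Neumann measurement on the middle
factors, `tr(ρ · Π^{BC}(ρ)) = Σ_h ⟨u_h, σ u_h⟩²` where
`σ = Σ_{i,j} λ_i² μ_j² (b_i⊗c_j)(b_i⊗c_j)†`. -/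
theorem stmt1 {m n u v : ℕ} {ι κ : Type*} [Fintype ι] [Fintype κ]
    [DecidableEq ι] [DecidableEq κ]
    (ψ : Fin m × Fin n → ℂ) (φ : Fin u × Fin v → ℂ)
    (lam : ι → ℝ) (mu : κ → ℝ)
    (a : ι → Fin m → ℂ) (b : ι → Fin n → ℂ)
    (c : κ → Fin u → ℂ) (d : κ → Fin v → ℂ)
    (ha : ∀ i i', cInner (a i) (a i') = if i = i' then (1 : ℂ) else 0)
    (hb : ∀ i i', cInner (b i) (b i') = if i = i' then (1 : ℂ) else 0)
    (hc : ∀ j j', cInner (c j) (c j') = if j = j' then (1 : ℂ) else 0)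
    (hd : ∀ j j', cInner (d j) (d j') = if j = j' then (1 : ℂ) else 0)
    (hlam : ∀ i, 0 ≤ lam i) (hmu : ∀ j, 0 ≤ mu j)
    (hlam1 : ∑ i, lam i ^ 2 = 1) (hmu1 : ∑ j, mu j ^ 2 = 1)
    (hψ : ψ = fun p => ∑ i, (lam i : ℂ) * a i p.1 * b i p.2)
    (hφ : φ = fun p => ∑ j, (mu j : ℂ) * c j p.1 * d j p.2)
    (ρ : Matrix ((Fin m × Fin n) × Fin u × Fin v) ((Fin m × Fin n) × Fin u × Fin v) ℂ)
    (hρ : ρ = outer ψ ⊗ₖ outer φ)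
    (σ : Matrix (Fin n × Fin u) (Fin n × Fin u) ℂ)
    (hσ : σ = ∑ i, ∑ j, ((lam i ^ 2 * mu j ^ 2 : ℝ) : ℂ) •
        outer (fun p : Fin n × Fin u => b i p.1 * c j p.2))
    (w : (Fin n × Fin u) → (Fin n × Fin u) → ℂ) (hw : IsVNM w) :
    Matrix.trace (ρ * pinchBC w ρ) = ∑ h, (cInner (w h) (σ *ᵥ w h)) ^ 2 :=
  stmt1_general ψ φ lam mu a b c d ha hd hψ hφ ρ hρ σ hσ w
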